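/- arXiv:1809.08330 — 4 statements merged into one kernel-verified Lean document; each statement's English description precedes it below -/
import Mathlib

section
/- For every x with 0 < x < 1/2, the standard Gaussian upper-quantile function satisfies √(2π)·(1/2 − x) ≤ Φ̄^{−1}(x) ≤ √(2·log(1/(2x))). -/
open Real

/-- Standard normal density. -/
noncomputable def gphi (t : ℝ) : ℝ := (Real.sqrt (2 * Real.pi))⁻¹ * Real.exp (-(t ^ 2) / 2)

/-- Standard normal upper-tail (survival) function. -/
noncomputable def Phibar (t : ℝ) : ℝ := ∫ s in Set.Ioi t, gphi s

/-- Inverse of the standard normal upper-tail function. -/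
noncomputable def PhibarInv (x : ℝ) : ℝ := Function.invFun Phibar x

section Helpers
open MeasureTheory

lemma sqrt2pi_pos : 0 < Real.sqrt (2 * Real.pi) := Real.sqrt_pos.2 (by positivity)

lemma gphi_pos (t : ℝ) : 0 < gphi t := by
  unfold gphi; positivity

lemma gphi_integrable : Integrable gphi := by
  have h : Integrable (fun s : ℝ => Real.exp (-(1/2 : ℝ) * s ^ 2)) :=
    integrable_exp_neg_mul_sq (by norm_num)
  have := h.const_mul (Real.sqrt (2 * Real.pi))⁻¹
  refine this.congr (Filter.Eventually.of_forall fun s => ?_)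
  unfold gphi; ring_nf

lemma gphi_cont : Continuous gphi := by
  unfold gphi; continuity

lemma Phibar_zero : Phibar 0 = 1 / 2 := by
  have h : ∫ s in Set.Ioi (0:ℝ), Real.exp (-(1/2:ℝ) * s ^ 2) = Real.sqrt (π / (1/2)) / 2 :=
    integral_gaussian_Ioi (1/2)
  have h2 : Phibar 0 = (Real.sqrt (2 * Real.pi))⁻¹ * ∫ s in Set.Ioi (0:ℝ), Real.exp (-(1/2:ℝ) * s ^ 2) := by
    rw [← integral_const_mul]
    unfold Phibar gphi
    congr 1 with s
    ring_nf
  rw [h2, h]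
  rw [show π / (1/2) = 2 * π by ring]
  field_simp

lemma Phibar_split {a b : ℝ} (hab : a ≤ b) :
    Phibar a = (∫ s in a..b, gphi s) + Phibar b := by
  rw [intervalIntegral.integral_of_le hab]
  unfold Phibar
  rw [← setIntegral_union (Set.Ioc_disjoint_Ioi le_rfl) measurableSet_Ioi
      (gphi_integrable.integrableOn) (gphi_integrable.integrableOn),
    Set.Ioc_union_Ioi_eq_Ioi hab]

lemma Phibar_strictAnti : StrictAnti Phibar := by
  intro a b hab
  have h := Phibar_split hab.le
  have hpos : 0 < ∫ s in a..b, gphi s :=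
    intervalIntegral.intervalIntegral_pos_of_pos
      (gphi_cont.intervalIntegrable a b) (fun s => gphi_pos s) hab
  linarith

lemma Phibar_eq (t : ℝ) : Phibar t = Phibar 0 - ∫ s in (0:ℝ)..t, gphi s := by
  rcases le_total 0 t with h | h
  · have := Phibar_split h; linarith
  · have := Phibar_split h
    rw [intervalIntegral.integral_symm] at this
    linarith

lemma Phibar_continuous : Continuous Phibar := by
  have : Continuous fun t => ∫ s in (0:ℝ)..t, gphi s :=
    intervalIntegral.continuous_primitive (fun a b => gphi_cont.intervalIntegrable a b) 0
  have h2 : Phibar = fun t => Phibar 0 - ∫ s in (0:ℝ)..t, gphi s := funext Phibar_eq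
  rw [h2]
  exact continuous_const.sub this

theorem shift_Ioi (f : ℝ → ℝ) (t : ℝ) : ∫ s in Set.Ioi t, f (s - t) = ∫ s in Set.Ioi 0, f s := by
  rw [← MeasureTheory.integral_indicator (measurableSet_Ioi (a := t)),
      ← MeasureTheory.integral_add_right_eq_self
        (fun s => (Set.Ioi t).indicator (fun u => f (u - t)) s) t,
      ← MeasureTheory.integral_indicator (measurableSet_Ioi (a := (0:ℝ)))]
  congr 1 with s
  by_cases h : 0 < s <;> simp [Set.indicator, Set.mem_Ioi, h]

lemma Phibar_tail {t : ℝ} (ht : 0 ≤ t) : Phibar t ≤ Real.exp (-(t ^ 2) / 2) / 2 := by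
  have key : Phibar t ≤ ∫ s in Set.Ioi t, Real.exp (-(t ^ 2) / 2) * gphi (s - t) := by
    refine setIntegral_mono_on gphi_integrable.integrableOn
      (((gphi_integrable.comp_sub_right t).const_mul _).integrableOn) measurableSet_Ioi ?_
    intro s hs
    rw [Set.mem_Ioi] at hs
    unfold gphi
    rw [← mul_assoc, mul_comm (Real.exp (-(t^2)/2)), mul_assoc, ← Real.exp_add]
    have : -(s ^ 2) / 2 ≤ -(t ^ 2) / 2 + -((s - t) ^ 2) / 2 := by nlinarith
    exact mul_le_mul_of_nonneg_left (Real.exp_le_exp.2 this) (by positivity)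
  rw [integral_const_mul, shift_Ioi] at key
  have : (∫ s in Set.Ioi (0:ℝ), gphi s) = 1 / 2 := Phibar_zero
  rw [this] at key
  linarith

lemma gphi_le (s : ℝ) : gphi s ≤ (Real.sqrt (2 * Real.pi))⁻¹ := by
  unfold gphi
  have : Real.exp (-(s ^ 2) / 2) ≤ 1 := Real.exp_le_one_iff.2 (by nlinarith [sq_nonneg s])
  calc (Real.sqrt (2 * Real.pi))⁻¹ * Real.exp (-(s ^ 2) / 2)
      ≤ (Real.sqrt (2 * Real.pi))⁻¹ * 1 :=
        mul_le_mul_of_nonneg_left this (by positivity)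
    _ = _ := mul_one _


end Helpers

theorem gaussian_quantile_bounds (x : ℝ) (hx0 : 0 < x) (hx : x < 1 / 2) :
    Real.sqrt (2 * Real.pi) * (1 / 2 - x) ≤ PhibarInv x ∧
    PhibarInv x ≤ Real.sqrt (2 * Real.log (1 / (2 * x))) := by
  have h2x : 0 < 2 * x := by linarith
  have hlogpos : 0 < Real.log (1 / (2 * x)) :=
    Real.log_pos (by rw [lt_div_iff₀ h2x]; linarith)
  have hlog2x : Real.log (2 * x) = - Real.log (1 / (2 * x)) := by
    rw [one_div, Real.log_inv, neg_neg]
  obtain ⟨T, hT0, hT2⟩ : ∃ T : ℝ, 0 ≤ T ∧ 2 * Real.log (1 / (2 * x)) < T ^ 2 := by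
    refine ⟨Real.sqrt (2 * Real.log (1 / (2 * x))) + 1, by positivity, ?_⟩
    have hs : Real.sqrt (2 * Real.log (1 / (2 * x))) ^ 2 = 2 * Real.log (1 / (2 * x)) :=
      Real.sq_sqrt (by positivity)
    nlinarith [Real.sqrt_nonneg (2 * Real.log (1 / (2 * x)))]
  have hPT : Phibar T < x := by
    have h1 : Phibar T ≤ Real.exp (-(T ^ 2) / 2) / 2 := Phibar_tail hT0
    have h2 : Real.exp (-(T ^ 2) / 2) < 2 * x := by
      rw [← Real.exp_log h2x]
      apply Real.exp_lt_exp.2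
      rw [hlog2x]
      linarith
    linarith
  have hmem : x ∈ Set.Icc (Phibar T) (Phibar 0) := by
    rw [Phibar_zero]; exact ⟨hPT.le, hx.le⟩
  obtain ⟨t, ⟨ht0, htT⟩, hPt⟩ :=
    intermediate_value_Icc' hT0 Phibar_continuous.continuousOn hmem
  have hinv : PhibarInv x = t := by
    rw [← hPt]
    exact Function.leftInverse_invFun Phibar_strictAnti.injective t
  rw [hinv]
  constructor
  · -- lower bound
    have hsplit := Phibar_split ht0
    rw [Phibar_zero, hPt] at hsplit
    have hbound : (∫ s in (0:ℝ)..t, gphi s) ≤ t * (Real.sqrt (2 * Real.pi))⁻¹ := by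
      calc (∫ s in (0:ℝ)..t, gphi s)
          ≤ ∫ _ in (0:ℝ)..t, (Real.sqrt (2 * Real.pi))⁻¹ :=
            intervalIntegral.integral_mono_on ht0 (gphi_cont.intervalIntegrable 0 t)
              intervalIntegrable_const (fun s _ => gphi_le s)
        _ = t * (Real.sqrt (2 * Real.pi))⁻¹ := by
            rw [intervalIntegral.integral_const]; simp [smul_eq_mul]
    have hc : Real.sqrt (2 * Real.pi) * (Real.sqrt (2 * Real.pi))⁻¹ = 1 :=
      mul_inv_cancel₀ sqrt2pi_pos.ne'
    have h3 : 1 / 2 - x ≤ t * (Real.sqrt (2 * Real.pi))⁻¹ := by linarith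
    calc Real.sqrt (2 * Real.pi) * (1 / 2 - x)
        ≤ Real.sqrt (2 * Real.pi) * (t * (Real.sqrt (2 * Real.pi))⁻¹) :=
          mul_le_mul_of_nonneg_left h3 sqrt2pi_pos.le
      _ = t := by rw [mul_comm t, ← mul_assoc, hc, one_mul]
  · -- upper bound
    have h1 : Phibar t ≤ Real.exp (-(t ^ 2) / 2) / 2 := Phibar_tail ht0
    rw [hPt] at h1
    have h2 : 2 * x ≤ Real.exp (-(t ^ 2) / 2) := by linarith
    have h3 : Real.log (2 * x) ≤ -(t ^ 2) / 2 := by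
      calc Real.log (2 * x) ≤ Real.log (Real.exp (-(t ^ 2) / 2)) :=
            Real.log_le_log h2x h2
        _ = -(t ^ 2) / 2 := Real.log_exp _
    have h4 : t ^ 2 ≤ 2 * Real.log (1 / (2 * x)) := by
      rw [hlog2x] at h3
      linarith
    exact (Real.le_sqrt ht0 (by positivity)).2 h4
end

section
/- For every even integer q ≥ 2 and every integer j with 0 ≤ j ≤ q, the coefficient a_{j,q} = (−4)^j · q·(q+j−1)! / ( (q−j)!·(2j)! ) satisfies |a_{j,q}| ≤ (3 + 2√2)^q. -/
noncomputable def chebF (q j : ℕ) : ℝ :=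
  if j ≤ q then
    (4 : ℝ) ^ j * q * (Nat.factorial (q + j - 1)) /
      ((Nat.factorial (q - j)) * (Nat.factorial (2 * j)))
  else 0

lemma chebF_nonneg (q j : ℕ) : 0 ≤ chebF q j := by
  unfold chebF; split
  · positivity
  · exact le_refl 0

lemma chebF_zero_of_gt {q j : ℕ} (h : q < j) : chebF q j = 0 := by
  unfold chebF; rw [if_neg (by omega)]

lemma chebF_zero (n : ℕ) : chebF (n+1) 0 = 1 := by
  unfold chebF
  rw [if_pos (by omega), show n+1+0-1 = n by omega, show n+1-0 = n+1 by omega,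
      show 2*0 = 0 by omega]
  simp only [Nat.factorial_succ, pow_zero, Nat.sub_zero, Nat.factorial_zero,
    Nat.add_sub_cancel, Nat.mul_zero, Nat.cast_mul, Nat.cast_add, Nat.cast_one, mul_one, one_mul]
  rw [div_eq_one_iff_eq (by positivity)]

-- interior recurrence
lemma chebF_interior (i a : ℕ) :
    chebF (i+a+3) (i+1) =
      4 * chebF (i+a+2) i + 2 * chebF (i+a+2) (i+1) - chebF (i+a+1) (i+1) := by
  unfold chebF
  rw [if_pos (by omega), if_pos (by omega), if_pos (by omega), if_pos (by omega)]
  rw [show i+a+3 + (i+1) - 1 = 2*i+a+3 by omega,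
      show i+a+3 - (i+1) = a+2 by omega,
      show i+a+2 + i - 1 = 2*i+a+1 by omega,
      show i+a+2 - i = a+2 by omega,
      show i+a+2 + (i+1) - 1 = 2*i+a+2 by omega,
      show i+a+2 - (i+1) = a+1 by omega,
      show i+a+1 + (i+1) - 1 = 2*i+a+1 by omega,
      show i+a+1 - (i+1) = a by omega,
      show 2*(i+1) = 2*i+1+1 by omega,
      show 2*i+a+3 = (2*i+a+2)+1 by omega,
      show 2*i+a+2 = (2*i+a+1)+1 by omega,
      show a+2 = (a+1)+1 by omega]
  simp only [Nat.factorial_succ]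
  have h1 : (Nat.factorial (2*i+a+1) : ℝ) ≠ 0 := by positivity
  have h2 : (Nat.factorial (2*i) : ℝ) ≠ 0 := by positivity
  have h3 : (Nat.factorial a : ℝ) ≠ 0 := by positivity
  push_cast
  field_simp
  ring

-- boundary case j = q+1 (i = q)
lemma chebF_boundary1 (q : ℕ) :
    chebF (q+2) (q+1) =
      4 * chebF (q+1) q + 2 * chebF (q+1) (q+1) - chebF q (q+1) := by
  unfold chebF
  rw [if_pos (by omega), if_pos (by omega), if_pos (by omega), if_neg (by omega)]
  rw [show q+2 + (q+1) - 1 = 2*(q+1) by omega,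
      show q+2 - (q+1) = 1 by omega,
      show q+1 + q - 1 = 2*q by omega,
      show q+1 - q = 1 by omega,
      show q+1 + (q+1) - 1 = 2*q+1 by omega,
      show q+1 - (q+1) = 0 by omega,
      show 2*(q+1) = (2*q+1)+1 by omega]
  simp only [Nat.factorial_succ, Nat.factorial_one, Nat.factorial_zero]
  have h1 : (Nat.factorial (2*q) : ℝ) ≠ 0 := by positivity
  have h2 : (Nat.factorial (2*q+1) : ℝ) ≠ 0 := by positivity
  push_cast
  field_simp
  ring

-- boundary case j = q+2 (i = q+1)
lemma chebF_boundary2 (q : ℕ) :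
    chebF (q+2) (q+2) =
      4 * chebF (q+1) (q+1) + 2 * chebF (q+1) (q+2) - chebF q (q+2) := by
  unfold chebF
  rw [if_pos (by omega), if_pos (by omega), if_neg (by omega), if_neg (by omega)]
  rw [show q+2 + (q+2) - 1 = 2*q+3 by omega,
      show q+2 - (q+2) = 0 by omega,
      show q+1 + (q+1) - 1 = 2*q+1 by omega,
      show q+1 - (q+1) = 0 by omega,
      show 2*(q+2) = (2*q+3)+1 by omega,
      show 2*(q+1) = (2*q+1)+1 by omega]
  simp only [Nat.factorial_succ, Nat.factorial_zero]
  have h1 : (Nat.factorial (2*q+1) : ℝ) ≠ 0 := by positivity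
  have h2 : (Nat.factorial (2*q+3) : ℝ) ≠ 0 := by positivity
  push_cast
  field_simp
  ring

lemma chebF_rec (q i : ℕ) (hi : i ≤ q + 1) :
    chebF (q+2) (i+1) =
      4 * chebF (q+1) i + 2 * chebF (q+1) (i+1) - chebF q (i+1) := by
  rcases Nat.lt_or_ge i q with h | h
  · -- i + 1 ≤ q, interior with q = i+1+a
    obtain ⟨a, rfl⟩ : ∃ a, q = i + a + 1 := ⟨q - i - 1, by omega⟩
    have := chebF_interior i a
    rw [show i+a+1+2 = i+a+3 by omega, show i+a+1+1 = i+a+2 by omega]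
    exact this
  · rcases Nat.eq_or_lt_of_le h with h' | h'
    · subst h'; exact chebF_boundary1 _
    · have : i = q + 1 := by omega
      subst this
      exact chebF_boundary2 q

noncomputable def chebS (q : ℕ) : ℝ := ∑ j ∈ Finset.range (q+1), chebF q j

lemma chebS_nonneg (q : ℕ) : 0 ≤ chebS q :=
  Finset.sum_nonneg fun j _ => chebF_nonneg q j

lemma chebF_le_chebS (q j : ℕ) (hj : j ≤ q) : chebF q j ≤ chebS q :=
  Finset.single_le_sum (fun i _ => chebF_nonneg q i) (Finset.mem_range.mpr (by omega))

lemma chebS_rec (q : ℕ) (hq : 1 ≤ q) : chebS (q+2) = 6 * chebS (q+1) - chebS q := by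
  obtain ⟨n, rfl⟩ : ∃ n, q = n + 1 := ⟨q - 1, by omega⟩
  have e1 : chebS (n+3) = (∑ i ∈ Finset.range (n+3), chebF (n+3) (i+1)) + chebF (n+3) 0 := by
    unfold chebS
    exact Finset.sum_range_succ' _ _
  rw [e1]
  have e2 : ∀ i ∈ Finset.range (n+3),
      chebF (n+3) (i+1) =
        4 * chebF (n+2) i + 2 * chebF (n+2) (i+1) - chebF (n+1) (i+1) := by
    intro i hi
    have hi' : i ≤ n + 2 := by simpa using Nat.lt_succ_iff.mp (Finset.mem_range.mp hi)
    have := chebF_rec (n+1) i (by omega)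
    rw [show n+1+2 = n+3 by omega, show n+1+1 = n+2 by omega] at this
    exact this
  rw [Finset.sum_congr rfl e2]
  rw [Finset.sum_sub_distrib, Finset.sum_add_distrib, ← Finset.mul_sum, ← Finset.mul_sum]
  have s1 : ∑ i ∈ Finset.range (n+3), chebF (n+2) i = chebS (n+2) := rfl
  have s2 : ∑ i ∈ Finset.range (n+3), chebF (n+2) (i+1) = chebS (n+2) - 1 := by
    have h := Finset.sum_range_succ' (fun j => chebF (n+2) j) (n+3)
    -- h : ∑_{j < n+4} = ∑_{i<n+3} f (i+1) + f 0
    have hz : chebF (n+2) (n+3) = 0 := chebF_zero_of_gt (by omega)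
    have h0 : chebF (n+2) 0 = 1 := chebF_zero (n+1)
    have htot : ∑ j ∈ Finset.range (n+4), chebF (n+2) j = chebS (n+2) := by
      rw [Finset.sum_range_succ]
      unfold chebS
      rw [hz, add_zero]
    rw [htot, h0] at h
    linarith
  have s3 : ∑ i ∈ Finset.range (n+3), chebF (n+1) (i+1) = chebS (n+1) - 1 := by
    have h := Finset.sum_range_succ' (fun j => chebF (n+1) j) (n+3)
    have hz1 : chebF (n+1) (n+2) = 0 := chebF_zero_of_gt (by omega)
    have hz2 : chebF (n+1) (n+3) = 0 := chebF_zero_of_gt (by omega)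
    have h0 : chebF (n+1) 0 = 1 := chebF_zero n
    have htot : ∑ j ∈ Finset.range (n+4), chebF (n+1) j = chebS (n+1) := by
      rw [Finset.sum_range_succ, Finset.sum_range_succ]
      unfold chebS
      rw [hz1, hz2, add_zero, add_zero]
    rw [htot, h0] at h
    linarith
  have h00 : chebF (n+3) 0 = 1 := chebF_zero (n+2)
  rw [s1, s2, s3, h00]
  ring

lemma chebS_one : chebS 1 = 3 := by
  unfold chebS chebF
  rw [Finset.sum_range_succ, Finset.sum_range_succ, Finset.sum_range_zero]
  norm_num [Nat.factorial]

lemma chebS_two : chebS 2 = 17 := by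
  unfold chebS chebF
  rw [Finset.sum_range_succ, Finset.sum_range_succ, Finset.sum_range_succ,
    Finset.sum_range_zero]
  norm_num [Nat.factorial]

lemma sqrt2_sq : Real.sqrt 2 * Real.sqrt 2 = 2 :=
  Real.mul_self_sqrt (by norm_num)

lemma sqrt2_nonneg : (0:ℝ) ≤ Real.sqrt 2 := Real.sqrt_nonneg 2

lemma chebS_step : ∀ q, 1 ≤ q → chebS (q+1) ≤ (3 + 2 * Real.sqrt 2) * chebS q := by
  intro q hq
  induction q, hq using Nat.le_induction with
  | base =>
    rw [chebS_one, chebS_two]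
    nlinarith [sqrt2_sq, sqrt2_nonneg]
  | succ q hq ih =>
    rw [chebS_rec q hq]
    have ih' := ih
    nlinarith [sqrt2_sq, sqrt2_nonneg, ih, chebS_nonneg (q+1), chebS_nonneg q]

lemma chebS_bound : ∀ q, 1 ≤ q → chebS q ≤ (3 + 2 * Real.sqrt 2) ^ q := by
  intro q hq
  induction q, hq using Nat.le_induction with
  | base =>
    rw [chebS_one, pow_one]
    nlinarith [sqrt2_nonneg]
  | succ q hq ih =>
    calc chebS (q+1) ≤ (3 + 2 * Real.sqrt 2) * chebS q := chebS_step q hq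
    _ ≤ (3 + 2 * Real.sqrt 2) * (3 + 2 * Real.sqrt 2) ^ q := by
        have : (0:ℝ) ≤ 3 + 2 * Real.sqrt 2 := by nlinarith [sqrt2_nonneg]
        exact mul_le_mul_of_nonneg_left ih this
    _ = (3 + 2 * Real.sqrt 2) ^ (q+1) := by rw [pow_succ]; ring

theorem chebyshev_coeff_bound (q j : ℕ) (hq2 : 2 ≤ q) (hq : Even q) (hj : j ≤ q) :
    |(-4 : ℝ) ^ j * q * (Nat.factorial (q + j - 1)) /
        ((Nat.factorial (q - j)) * (Nat.factorial (2 * j)))| ≤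
      (3 + 2 * Real.sqrt 2) ^ q := by
  have habs : |(-4 : ℝ) ^ j * q * (Nat.factorial (q + j - 1)) /
      ((Nat.factorial (q - j)) * (Nat.factorial (2 * j)))| = chebF q j := by
    unfold chebF
    rw [if_pos hj]
    rw [abs_div, abs_mul, abs_mul, abs_pow, abs_neg]
    rw [abs_of_nonneg (by positivity : (0:ℝ) ≤ (4:ℝ)),
        Nat.abs_cast, Nat.abs_cast,
        abs_of_nonneg (by positivity : (0:ℝ) ≤ ((Nat.factorial (q-j) : ℝ) * (Nat.factorial (2*j) : ℝ)))]
  rw [habs]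
  calc chebF q j ≤ chebS q := chebF_le_chebS q j hj
  _ ≤ (3 + 2 * Real.sqrt 2) ^ q := chebS_bound q (by omega)
end

section
/- Let a, b, c be reals with a < b < c, and let P be a polynomial of degree at most k with |P(x)| ≤ 1 for all x ∈ [b,c]. Then |P(a)| ≤ |T_k( 1 + 2(b−a)/(c−b) )|, where T_k is the Chebyshev polynomial of degree k; moreover this bound is attained by a suitably rescaled Chebyshev polynomial. -/
open Polynomial Polynomial.Chebyshev Real Finset

lemma natDegree_T_le' (n : ℕ) : (T ℝ (n : ℤ)).natDegree ≤ n := by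
  have key : ∀ m : ℕ, (T ℝ (m : ℤ)).natDegree ≤ m ∧ (T ℝ ((m : ℤ) + 1)).natDegree ≤ m + 1 := by
    intro m
    induction m with
    | zero => constructor <;> simp [T_zero, T_one, natDegree_X_le]
    | succ m ih =>
      refine ⟨by push_cast; exact ih.2, ?_⟩
      have h2 : ((m : ℤ) + 1) + 1 = (m : ℤ) + 2 := by ring
      push_cast
      rw [h2, T_add_two]
      refine le_trans (natDegree_sub_le _ _) (max_le ?_ (le_trans ih.1 (by omega)))
      refine le_trans (natDegree_mul_le) ?_
      have h3 : (2 * X : ℝ[X]).natDegree ≤ 1 := by compute_degree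
      omega
  exact (key n).1

lemma abs_eval_T_le_one (n : ℕ) {x : ℝ} (hx : x ∈ Set.Icc (-1 : ℝ) 1) :
    |(T ℝ (n : ℤ)).eval x| ≤ 1 := by
  have h := Real.cos_arccos hx.1 hx.2
  rw [← h, T_real_cos]
  exact abs_cos_le_one _

lemma abs_cos_le_one' (x : ℝ) : Real.cos x ∈ Set.Icc (-1 : ℝ) 1 :=
  ⟨Real.neg_one_le_cos x, Real.cos_le_one x⟩

lemma key_lemma (k : ℕ) (hk : 0 < k) (y : ℝ) (hy : 1 < y) (Q : ℝ[X])
    (hdeg : Q.natDegree ≤ k) (hQ : ∀ x ∈ Set.Icc (-1 : ℝ) 1, |Q.eval x| ≤ 1) :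
    |Q.eval y| ≤ (T ℝ (k : ℤ)).eval y := by
  set v : ℕ → ℝ := fun i => Real.cos (i * π / k) with hv
  set s : Finset ℕ := Finset.range (k + 1) with hs
  have hkR : (0 : ℝ) < k := by exact_mod_cast hk
  -- node arguments lie in [0, π]
  have harg : ∀ i ∈ s, (i : ℝ) * π / k ∈ Set.Icc 0 π := by
    intro i hi
    simp only [hs, Finset.mem_range] at hi
    constructor
    · positivity
    · rw [div_le_iff₀ hkR]
      have : (i : ℝ) ≤ k := by exact_mod_cast Nat.lt_succ_iff.mp hi
      nlinarith [Real.pi_pos]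
  have hmono : ∀ i ∈ s, ∀ j ∈ s, i < j → v j < v i := by
    intro i hi j hj hij
    refine Real.strictAntiOn_cos (harg i hi) (harg j hj) ?_
    have h1 : (i : ℝ) < j := by exact_mod_cast hij
    have h2 := Real.pi_pos
    rw [div_lt_div_iff₀ hkR hkR]
    nlinarith [mul_pos (mul_pos (sub_pos.mpr h1) h2) hkR]
  have hinj : Set.InjOn v s := by
    intro i hi j hj hij
    by_contra hne
    rcases lt_or_gt_of_ne hne with h | h
    · exact absurd hij (ne_of_lt (hmono i hi j hj h)).symm
    · exact absurd hij (ne_of_lt (hmono j hj i hi h))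
  have hcos : ∀ i : ℕ, Real.cos (i * π) = (-1 : ℝ) ^ i := by
    intro i
    simpa using Real.cos_nat_mul_pi_sub 0 i
  have hTnodes : ∀ i ∈ s, (T ℝ (k : ℤ)).eval (v i) = (-1 : ℝ) ^ i := by
    intro i hi
    have harg2 : ((k : ℤ) : ℝ) * ((i : ℝ) * π / k) = (i : ℝ) * π := by
      push_cast
      field_simp
    rw [hv]
    simp only
    rw [T_real_cos, harg2, hcos]
  have hcard : #s = k + 1 := Finset.card_range _
  have hsign : ∀ i ∈ s, (-1 : ℝ) ^ i * (Lagrange.basis s v i).eval y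
      = |(Lagrange.basis s v i).eval y| := by
    intro i hi
    have hpos : 0 < (-1 : ℝ) ^ i * (Lagrange.basis s v i).eval y := by
      have heval : (Lagrange.basis s v i).eval y
          = ∏ j ∈ s.erase i, ((v i - v j)⁻¹ * (y - v j)) := by
        rw [Lagrange.basis, eval_prod]
        refine Finset.prod_congr rfl fun j hj => ?_
        simp [Lagrange.basisDivisor]
      have hsignprod : (-1 : ℝ) ^ i = ∏ j ∈ s.erase i, (if j < i then (-1 : ℝ) else 1) := by
        rw [Finset.prod_ite, Finset.prod_const, Finset.prod_const, one_pow, mul_one]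
        congr 1
        have hfil : (s.erase i).filter (· < i) = Finset.range i := by
          simp only [hs] at hi ⊢
          ext j
          simp only [Finset.mem_filter, Finset.mem_erase, Finset.mem_range] at *
          omega
        rw [hfil, Finset.card_range]
      rw [heval, hsignprod, ← Finset.prod_mul_distrib]
      apply Finset.prod_pos
      intro j hj
      have hji : j ≠ i := (Finset.mem_erase.mp hj).1
      have hjs : j ∈ s := (Finset.mem_erase.mp hj).2
      have hvj_le : v j ≤ 1 := Real.cos_le_one _
      by_cases h : j < i
      · have hlt : v i < v j := hmono j hjs i hi h
        simp only [if_pos h]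
        have heq : (-1 : ℝ) * ((v i - v j)⁻¹ * (y - v j)) = (v j - v i)⁻¹ * (y - v j) := by
          rw [show v i - v j = -(v j - v i) by ring, inv_neg]
          ring
        rw [heq]
        exact mul_pos (inv_pos.mpr (by linarith)) (by linarith)
      · have hij2 : i < j := lt_of_le_of_ne (not_lt.mp h) (Ne.symm hji)
        have hlt : v j < v i := hmono i hi j hjs hij2
        simp only [if_neg h, one_mul]
        exact mul_pos (inv_pos.mpr (by linarith)) (by linarith)
    have habs : |(Lagrange.basis s v i).eval y|
        = |(-1 : ℝ) ^ i * (Lagrange.basis s v i).eval y| := by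
      rw [abs_mul, abs_pow, abs_neg, abs_one, one_pow, one_mul]
    rw [habs, abs_of_pos hpos]
  have hQrep : Q.eval y = ∑ i ∈ s, Q.eval (v i) * (Lagrange.basis s v i).eval y := by
    have hdQ : Q.degree < (#s : ℕ) := by
      rw [hcard]
      refine lt_of_le_of_lt Q.degree_le_natDegree ?_
      exact_mod_cast Nat.lt_succ_of_le hdeg
    conv_lhs => rw [Lagrange.eq_interpolate hinj hdQ]
    simp [Lagrange.interpolate_apply, eval_finset_sum]
  have hTrep : (T ℝ (k : ℤ)).eval y = ∑ i ∈ s, (-1 : ℝ) ^ i * (Lagrange.basis s v i).eval y := by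
    have hdT : (T ℝ (k : ℤ)).degree < (#s : ℕ) := by
      rw [hcard]
      refine lt_of_le_of_lt (degree_le_natDegree) ?_
      exact_mod_cast Nat.lt_succ_of_le (natDegree_T_le' k)
    conv_lhs => rw [Lagrange.eq_interpolate hinj hdT]
    rw [Lagrange.interpolate_apply, eval_finset_sum]
    refine Finset.sum_congr rfl fun i hi => ?_
    rw [eval_mul, eval_C, hTnodes i hi]
  rw [hQrep, hTrep]
  refine le_trans (Finset.abs_sum_le_sum_abs _ _) (Finset.sum_le_sum fun i hi => ?_)
  rw [hsign i hi, abs_mul]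
  exact mul_le_of_le_one_left (abs_nonneg _) (hQ _ (abs_cos_le_one' _))

theorem chebyshev_extremal (k : ℕ) (a b c : ℝ) (hab : a < b) (hbc : b < c) :
    (∀ P : ℝ[X], P.natDegree ≤ k → (∀ x ∈ Set.Icc b c, |P.eval x| ≤ 1) →
      |P.eval a| ≤ |(T ℝ (k : ℤ)).eval (1 + 2 * (b - a) / (c - b))|) ∧
    (∃ P : ℝ[X], P.natDegree ≤ k ∧ (∀ x ∈ Set.Icc b c, |P.eval x| ≤ 1) ∧
      |P.eval a| = |(T ℝ (k : ℤ)).eval (1 + 2 * (b - a) / (c - b))|) := by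
  have hcb : (0 : ℝ) < c - b := by linarith
  have hσ : 1 < 1 + 2 * (b - a) / (c - b) := by
    have h0 : 0 < 2 * (b - a) / (c - b) := by
      apply div_pos <;> linarith
    linarith
  constructor
  · intro P hPd hPb
    rcases Nat.eq_zero_or_pos k with hk | hk
    · subst hk
      have hP : P = C (P.coeff 0) := eq_C_of_natDegree_le_zero (by simpa using hPd)
      have hb1 : |P.eval b| ≤ 1 := hPb b ⟨le_refl b, le_of_lt hbc⟩
      simp only [Nat.cast_zero, T_zero, eval_one, abs_one]
      rw [hP] at hb1 ⊢
      simpa using hb1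
    · set Q : ℝ[X] := P.comp (C ((b + c) / 2) - C ((c - b) / 2) * X) with hQdef
      have hQd : Q.natDegree ≤ k := by
        refine le_trans natDegree_comp_le ?_
        have h1 : (C ((b + c) / 2) - C ((c - b) / 2) * X : ℝ[X]).natDegree ≤ 1 := by
          compute_degree
        calc P.natDegree * (C ((b + c) / 2) - C ((c - b) / 2) * X : ℝ[X]).natDegree
            ≤ k * 1 := Nat.mul_le_mul hPd h1
          _ = k := mul_one k
      have hQb : ∀ x ∈ Set.Icc (-1 : ℝ) 1, |Q.eval x| ≤ 1 := by
        intro t ht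
        rw [hQdef, eval_comp]
        simp only [eval_sub, eval_mul, eval_C, eval_X]
        apply hPb
        constructor <;> nlinarith [ht.1, ht.2]
      have hQa : Q.eval (1 + 2 * (b - a) / (c - b)) = P.eval a := by
        rw [hQdef, eval_comp]
        simp only [eval_sub, eval_mul, eval_C, eval_X]
        congr 1
        field_simp
        ring
      rw [← hQa]
      exact le_trans (key_lemma k hk _ hσ Q hQd hQb) (le_abs_self _)
  · refine ⟨(T ℝ (k : ℤ)).comp (C ((b + c) / (c - b)) - C (2 / (c - b)) * X), ?_, ?_, ?_⟩
    · refine le_trans natDegree_comp_le ?_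
      have h1 : (C ((b + c) / (c - b)) - C (2 / (c - b)) * X : ℝ[X]).natDegree ≤ 1 := by
        compute_degree
      calc (T ℝ (k : ℤ)).natDegree * (C ((b + c) / (c - b)) - C (2 / (c - b)) * X : ℝ[X]).natDegree
          ≤ k * 1 := Nat.mul_le_mul (natDegree_T_le' k) h1
        _ = k := mul_one k
    · intro x hx
      rw [eval_comp]
      simp only [eval_sub, eval_mul, eval_C, eval_X]
      have hu : (b + c) / (c - b) - 2 / (c - b) * x = (b + c - 2 * x) / (c - b) := by
        ring
      rw [hu]
      apply abs_eval_T_le_one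
      constructor
      · rw [le_div_iff₀ hcb]
        linarith [hx.2]
      · rw [div_le_one hcb]
        linarith [hx.1]
    · rw [eval_comp]
      simp only [eval_sub, eval_mul, eval_C, eval_X]
      have hu : (b + c) / (c - b) - 2 / (c - b) * a = 1 + 2 * (b - a) / (c - b) := by
        field_simp
        ring
      rw [hu]
end

section
/- Let Z be a hypergeometric random variable with parameters (k, k, n) (i.e., the size of the intersection of two independent uniformly random k-subsets of {1,…,n}), and let θ be real. Then E[exp(θ²·Z)] ≤ [1 + (k/n)(e^{θ²} − 1)]^k ≤ exp( (k²/n)·e^{θ²} ). -/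
/-!
Writing `x = 1 + y`, the expansion `x ^ Z = ∑ⱼ (Z choose j) yʲ` reduces the bound to the
factorial moments `E[Z choose j] = (k choose j) (n-j choose k-j) / (n choose k)`. Each is at most
`(k choose j) (k/n)ʲ`, the corresponding moment of a `Binomial(k, k/n)` variable, and summing
back gives `(1 + (k/n) y)ᵏ`. The second inequality is `1 + t ≤ eᵗ`.
-/

open Finset

theorem Nat.sum_choose_mul_choose_mul_choose (k r j : ℕ) (hj : j ≤ k) :
    ∑ i ∈ range (k + 1), k.choose i * r.choose (k - i) * i.choose j =
      k.choose j * (k - j + r).choose (k - j) := by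
  have hlow : ∑ i ∈ range j, k.choose i * r.choose (k - i) * i.choose j = 0 :=
    sum_eq_zero fun i hi => by rw [Nat.choose_eq_zero_of_lt (mem_range.mp hi), mul_zero]
  rw [← sum_range_add_sum_Ico _ (by omega : j ≤ k + 1), hlow, zero_add, sum_Ico_eq_sum_range,
    show k + 1 - j = k - j + 1 by omega]
  have hterm : ∀ m ∈ range (k - j + 1),
      k.choose (j + m) * r.choose (k - (j + m)) * (j + m).choose j =
        k.choose j * ((k - j).choose m * r.choose (k - j - m)) := by
    intro m _
    rw [mul_right_comm, Nat.choose_mul (Nat.le_add_right j m), Nat.add_sub_cancel_left,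
      Nat.sub_add_eq, mul_assoc]
  rw [sum_congr rfl hterm, ← mul_sum, Nat.add_choose_eq,
    Nat.sum_antidiagonal_eq_sum_range_succ_mk]

-- `(n-j choose k-j) / (n choose k) = ∏_{t<j} (k-t)/(n-t)`, and each factor is at most `k/n`.
theorem Nat.choose_sub_sub_mul_pow_le {n k j : ℕ} (hj : j ≤ k) (hkn : k ≤ n) :
    (n - j).choose (k - j) * n ^ j ≤ n.choose k * k ^ j := by
  induction j with
  | zero => simp
  | succ j ih =>
    have hpascal : (n - j) * (n - (j + 1)).choose (k - (j + 1)) =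
        (n - j).choose (k - j) * (k - j) := by
      obtain ⟨a, ha⟩ : ∃ a, n - j = a + 1 := ⟨n - (j + 1), by omega⟩
      obtain ⟨b, hb⟩ : ∃ b, k - j = b + 1 := ⟨k - (j + 1), by omega⟩
      rw [ha, hb, show n - (j + 1) = a by omega, show k - (j + 1) = b by omega]
      exact Nat.add_one_mul_choose_eq a b
    have hratio : (k - j) * n ≤ (n - j) * k := by
      zify [hkn, (by omega : j ≤ k), (by omega : j ≤ n)]
      nlinarith
    refine Nat.le_of_mul_le_mul_left ?_ (by omega : 0 < n - j)
    calc (n - j) * ((n - (j + 1)).choose (k - (j + 1)) * n ^ (j + 1))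
        = (n - j).choose (k - j) * n ^ j * ((k - j) * n) := by
          rw [← mul_assoc, hpascal]; ring
      _ ≤ n.choose k * k ^ j * ((n - j) * k) :=
          Nat.mul_le_mul (ih (by omega)) hratio
      _ = (n - j) * (n.choose k * k ^ (j + 1)) := by ring

theorem Nat.choose_sub_sub_div_choose_le {n k j : ℕ} (hj : j ≤ k) (hkn : k ≤ n) :
    ((n - j).choose (k - j) : ℝ) / n.choose k ≤ ((k : ℝ) / n) ^ j := by
  obtain rfl | hn := n.eq_zero_or_pos
  · obtain rfl : k = 0 := by omega
    obtain rfl : j = 0 := by omega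
    simp
  rw [div_pow, div_le_div_iff₀ (by exact_mod_cast Nat.choose_pos hkn) (by positivity)]
  exact_mod_cast (Nat.choose_sub_sub_mul_pow_le hj hkn).trans_eq (mul_comm _ _)

theorem sum_mul_add_one_pow {R : Type*} [CommSemiring R] (a : ℕ → R) (N : ℕ) (y : R) :
    ∑ i ∈ range (N + 1), a i * (y + 1) ^ i =
      ∑ j ∈ range (N + 1), (∑ i ∈ range (N + 1), a i * i.choose j) * y ^ j := by
  simp_rw [sum_mul, mul_assoc]
  rw [sum_comm]
  refine sum_congr rfl fun i hi => ?_
  rw [← mul_sum, add_pow]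
  congr 1
  simp only [one_pow, mul_one]
  refine (sum_subset (range_subset_range.mpr (by simpa using hi)) fun j _ hj => ?_).trans
    (sum_congr rfl fun j _ => mul_comm _ _)
  rw [Nat.choose_eq_zero_of_lt (by simpa using hj), Nat.cast_zero, mul_zero]

noncomputable def hypergeomPMF (n k i : ℕ) : ℝ :=
  (k.choose i * (n - k).choose (k - i) : ℝ) / n.choose k

theorem sum_hypergeomPMF_mul_choose {n k j : ℕ} (hj : j ≤ k) (hkn : k ≤ n) :
    ∑ i ∈ range (k + 1), hypergeomPMF n k i * i.choose j =
      k.choose j * ((n - j).choose (k - j) / n.choose k) := by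
  simp_rw [hypergeomPMF, div_mul_eq_mul_div, ← sum_div, mul_div_assoc']
  congr 1
  rw [show n - j = k - j + (n - k) by omega]
  exact_mod_cast Nat.sum_choose_mul_choose_mul_choose k (n - k) j hj

theorem sum_hypergeomPMF_mul_pow_le {n k : ℕ} (hkn : k ≤ n) {x : ℝ} (hx : 1 ≤ x) :
    ∑ i ∈ range (k + 1), hypergeomPMF n k i * x ^ i ≤ (1 + (k : ℝ) / n * (x - 1)) ^ k := by
  have hexpand := sum_mul_add_one_pow (hypergeomPMF n k) k (x - 1)
  rw [sub_add_cancel] at hexpand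
  calc ∑ i ∈ range (k + 1), hypergeomPMF n k i * x ^ i
      = ∑ j ∈ range (k + 1), k.choose j * ((n - j).choose (k - j) / n.choose k) * (x - 1) ^ j := by
        rw [hexpand]
        exact sum_congr rfl fun j hj => by
          rw [sum_hypergeomPMF_mul_choose (Nat.lt_succ_iff.mp (mem_range.mp hj)) hkn]
    _ ≤ ∑ j ∈ range (k + 1), k.choose j * ((k : ℝ) / n) ^ j * (x - 1) ^ j := by
        gcongr with j hj
        exact Nat.choose_sub_sub_div_choose_le (Nat.lt_succ_iff.mp (mem_range.mp hj)) hkn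
    _ = (1 + (k : ℝ) / n * (x - 1)) ^ k := by
        rw [add_comm 1, add_pow]
        simp only [one_pow, mul_one]
        exact sum_congr rfl fun j _ => by rw [mul_pow]; ring

theorem Real.one_add_pow_le_exp_mul {t : ℝ} (ht : -1 ≤ t) (k : ℕ) :
    (1 + t) ^ k ≤ Real.exp (k * t) := by
  rw [Real.exp_nat_mul]
  exact pow_le_pow_left₀ (by linarith) (by linarith [Real.add_one_le_exp t]) k

theorem hypergeometric_mgf_bound_general (n k : ℕ) (hkn : k ≤ n) (θ : ℝ) :
    (∑ i ∈ Finset.range (k + 1),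
        ((Nat.choose k i * Nat.choose (n - k) (k - i) : ℝ) / (Nat.choose n k : ℝ)) *
          Real.exp (θ ^ 2 * i)) ≤
      (1 + ((k : ℝ) / n) * (Real.exp (θ ^ 2) - 1)) ^ k ∧
    (1 + ((k : ℝ) / n) * (Real.exp (θ ^ 2) - 1)) ^ k ≤
      Real.exp (((k : ℝ) ^ 2 / n) * Real.exp (θ ^ 2)) := by
  have hx : 1 ≤ Real.exp (θ ^ 2) := Real.one_le_exp (sq_nonneg θ)
  constructor
  · simp_rw [mul_comm (θ ^ 2), Real.exp_nat_mul]
    exact sum_hypergeomPMF_mul_pow_le hkn hx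
  · calc (1 + (k : ℝ) / n * (Real.exp (θ ^ 2) - 1)) ^ k
        ≤ Real.exp (k * ((k : ℝ) / n * (Real.exp (θ ^ 2) - 1))) :=
          Real.one_add_pow_le_exp_mul
            ((neg_nonpos.mpr zero_le_one).trans (mul_nonneg (by positivity) (sub_nonneg.mpr hx))) k
      _ ≤ Real.exp ((k : ℝ) ^ 2 / n * Real.exp (θ ^ 2)) := by
          refine Real.exp_le_exp.mpr ?_
          rw [show (k : ℝ) * ((k : ℝ) / n * (Real.exp (θ ^ 2) - 1)) =
            (k : ℝ) ^ 2 / n * Real.exp (θ ^ 2) - (k : ℝ) ^ 2 / n by ring]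
          exact sub_le_self _ (by positivity)

/-- Moment generating bound for the hypergeometric distribution with parameters `(k, k, n)`:
the expectation `E[exp (θ² Z)]`, written out as a sum against the hypergeometric pmf, is at
most `(1 + (k/n)(e^{θ²} - 1))^k ≤ exp((k²/n) e^{θ²})`. -/
theorem hypergeometric_mgf_bound (n k : ℕ) (hk : 1 ≤ k) (hkn : k ≤ n) (θ : ℝ) :
    (∑ i ∈ Finset.range (k + 1),
        ((Nat.choose k i * Nat.choose (n - k) (k - i) : ℝ) / (Nat.choose n k : ℝ)) *
          Real.exp (θ ^ 2 * i)) ≤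
      (1 + ((k : ℝ) / n) * (Real.exp (θ ^ 2) - 1)) ^ k ∧
    (1 + ((k : ℝ) / n) * (Real.exp (θ ^ 2) - 1)) ^ k ≤
      Real.exp (((k : ℝ) ^ 2 / n) * Real.exp (θ ^ 2)) :=
  hypergeometric_mgf_bound_general n k hkn θ
end
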